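/- arXiv:1109.0056 — 2 statements merged into one kernel-verified Lean document; each statement's English description precedes it below -/
import Mathlib

section
/- Let Γ be a homotopy link diagram (no loops, and every path between two distinct vertices lying on the same segment passes through a vertex on a different segment), and let e be a mixed edge, free edge, or arc of Γ such that contraction Γ/e does not create a multiple edge between a pair of vertices. Then Γ/e is again a homotopy link diagram: it has no loops, and any path in Γ/e between distinct vertices on a common segment passes through a vertex on another segment. -/
/-!
A path none of whose vertices lies on a segment other than the `i`-th is the same as a chain of
the relation "lie on a common edge with no vertex on another segment", so the homotopy condition
says that distinct vertices of segment `i` are never connected by such a chain. Chains in `Γ/e`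
lift to `Γ`. For an edge to a free vertex, either the merged vertex is not admissible and the
chain never meets it, or the two identified vertices are joined by `e` itself and the whole chain
lifts. For an arc, lift the chain (started away from the merged vertex) only until it first meets
the merged vertex: this gives a chain in `Γ` from its start to its end, to `vv` or to `ww`, and the
last two are reachable only when the arc lies on the segment of the endpoints.
An edge of `Γ/e` is a loop only if it was parallel to `e`, which the no-multiple-edge hypothesis
excludes for an edge and the homotopy condition excludes for an arc.
-/

/-- A path between vertices `v` and `w` in a diagram with edge-endpoint map
`b : E → Sym2 V`: a nonempty sequence of edges whose first edge contains `v`, whose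
last edge contains `w`, and in which consecutive edges share a vertex. -/
def IsPath {V E : Type} (b : E → Sym2 V) (v w : V) (es : List E) : Prop :=
  (∃ e, es.head? = some e ∧ v ∈ b e) ∧ (∃ e, es.getLast? = some e ∧ w ∈ b e) ∧
    List.Chain' (fun e e' => ∃ u, u ∈ b e ∧ u ∈ b e') es

/-- The defining condition of homotopy link diagrams: every path between two distinct
segment vertices lying on the same segment passes through a vertex lying on a
different segment.  Here `segOf v = some i` means `v` is a segment vertex on the
`i`-th segment, and `segOf v = none` means `v` is a free vertex. -/
def HomotopyCond {V E : Type} (segOf : V → Option ℕ) (b : E → Sym2 V) : Prop :=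
  ∀ v w : V, v ≠ w → ∀ i : ℕ, segOf v = some i → segOf w = some i →
    ∀ es : List E, IsPath b v w es →
      ∃ e ∈ es, ∃ u ∈ b e, ∃ j : ℕ, segOf u = some j ∧ j ≠ i

open Relation

namespace Relation.TransGen

variable {α β : Type*} {f : α → β} {r : α → α → Prop} {s : β → β → Prop}

theorem lift_of_fibres (hlift : ∀ u u', s u u' → ∃ x y, f x = u ∧ f y = u' ∧ r x y)
    (hfib : ∀ x y, f x = f y → ReflTransGen r x y) {u u' : β} (h : TransGen s u u') :
    ∀ x y, f x = u → f y = u' → TransGen r x y := by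
  induction h with
  | single h =>
    obtain ⟨x₀, y₀, rfl, rfl, hr⟩ := hlift _ _ h
    intro x y hx hy
    exact trans_right (hfib x x₀ hx) ((TransGen.single hr).trans_left (hfib y₀ y hy.symm))
  | tail _ h ih =>
    obtain ⟨x₁, y₁, hx₁, rfl, hr⟩ := hlift _ _ h
    intro x y hx hy
    exact ((ih x x₁ hx hx₁).tail hr).trans_left (hfib y₁ y hy.symm)

/-- An `s`-chain lifts along `f` up to its first visit to `p`. -/
theorem lift_until (p : β) (hlift : ∀ u u', s u u' → ∃ x y, f x = u ∧ f y = u' ∧ r x y)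
    (hinj : ∀ x y, f x = f y → f x ≠ p → x = y) {u u' : β} (h : TransGen s u u') :
    ∀ x, f x = u → u ≠ p → ∃ y, (f y = u' ∨ f y = p) ∧ TransGen r x y := by
  induction h with
  | single h =>
    obtain ⟨x₀, y, hx₀, rfl, hr⟩ := hlift _ _ h
    intro x hx hp
    obtain rfl := hinj x₀ x (hx₀.trans hx.symm) (hx₀ ▸ hp)
    exact ⟨y, Or.inl rfl, .single hr⟩
  | @tail u₁ u₂ _ h ih =>
    intro x hx hp
    obtain ⟨y, hy | hy, hxy⟩ := ih x hx hp
    · by_cases hu₁ : u₁ = p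
      · exact ⟨y, Or.inr (hy.trans hu₁), hxy⟩
      obtain ⟨x₁, y₁, hx₁, rfl, hr⟩ := hlift _ _ h
      obtain rfl := hinj x₁ y (hx₁.trans hy.symm) (hx₁ ▸ hu₁)
      exact ⟨y₁, Or.inl rfl, hxy.tail hr⟩
    · exact ⟨y, Or.inr hy, hxy⟩

end Relation.TransGen

section Diagram

variable {V E : Type} (b : E → Sym2 V)

def Linked (P : V → Prop) (u u' : V) : Prop :=
  ∃ e, u ∈ b e ∧ u' ∈ b e ∧ ∀ x ∈ b e, P x

variable {b}

theorem Linked.symm {P : V → Prop} {u u' : V} (h : Linked b P u u') : Linked b P u' u :=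
  let ⟨e, hu, hu', hP⟩ := h
  ⟨e, hu', hu, hP⟩

instance {P : V → Prop} : Std.Symm (Linked b P) :=
  ⟨fun _ _ => Linked.symm⟩

theorem Linked.right {P : V → Prop} {u u' : V} (h : Linked b P u u') : P u' :=
  let ⟨_, _, hu', hP⟩ := h
  hP _ hu'

theorem Linked.left {P : V → Prop} {u u' : V} (h : Linked b P u u') : P u :=
  h.symm.right

theorem Linked.of_eq_mk {P : V → Prop} {e : E} {x y : V} (he : b e = s(x, y)) (hx : P x)
    (hy : P y) : Linked b P x y :=
  ⟨e, he ▸ Sym2.mem_mk_left x y, he ▸ Sym2.mem_mk_right x y, by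
    rw [he]; intro z hz; rcases Sym2.mem_iff.1 hz with rfl | rfl <;> assumption⟩

theorem Linked.exists_lift {E' W : Type} {ι : E' → E} {f : V → W} {P : V → Prop} {Q : W → Prop}
    (hPQ : ∀ x, Q (f x) → P x) {u u' : W} (h : Linked (fun e' => (b (ι e')).map f) Q u u') :
    ∃ x y, f x = u ∧ f y = u' ∧ Linked b P x y := by
  obtain ⟨e', hu, hu', hQ⟩ := h
  obtain ⟨x, hx, rfl⟩ := Sym2.mem_map.1 hu
  obtain ⟨y, hy, rfl⟩ := Sym2.mem_map.1 hu'
  exact ⟨x, y, rfl, rfl, ι e', hx, hy, fun z hz => hPQ z (hQ _ (Sym2.mem_map.2 ⟨z, hz, rfl⟩))⟩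

theorem IsPath.singleton {v w : V} {e : E} (hv : v ∈ b e) (hw : w ∈ b e) : IsPath b v w [e] :=
  ⟨⟨e, rfl, hv⟩, ⟨e, rfl, hw⟩, List.isChain_singleton e⟩

theorem IsPath.cons {v u w : V} {e : E} {es : List E} (hv : v ∈ b e) (hu : u ∈ b e)
    (h : IsPath b u w es) : IsPath b v w (e :: es) := by
  obtain ⟨⟨e₁, he₁, hu₁⟩, ⟨e₂, he₂, hw⟩, hchain⟩ := h
  cases es with
  | nil => simp at he₁
  | cons e' es =>
  obtain rfl : e' = e₁ := by simpa using he₁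
  exact ⟨⟨e, rfl, hv⟩, ⟨e₂, by simpa using he₂, hw⟩, hchain.cons_cons ⟨u, hu, hu₁⟩⟩

theorem IsPath.transGen {P : V → Prop} {v w : V} :
    ∀ {es : List E}, IsPath b v w es → (∀ e ∈ es, ∀ x ∈ b e, P x) → TransGen (Linked b P) v w
  | [], ⟨⟨_, h, _⟩, _⟩, _ => by simp at h
  | [e], ⟨⟨_, rfl, hv⟩, ⟨_, rfl, hw⟩, _⟩, hP => .single ⟨e, hv, hw, hP e (by simp)⟩
  | e :: e' :: es, ⟨⟨_, rfl, hv⟩, ⟨e₂, he₂, hw⟩, hchain⟩, hP => by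
    obtain ⟨⟨u, hu, hu'⟩, hchain'⟩ := List.isChain_cons_cons.1 hchain
    have hrest : IsPath b u w (e' :: es) :=
      ⟨⟨e', rfl, hu'⟩, ⟨e₂, by simpa using he₂, hw⟩, hchain'⟩
    exact .head ⟨e, hv, hu, hP e (by simp)⟩
      (hrest.transGen fun e he => hP e (List.mem_cons_of_mem _ he))

theorem exists_isPath_of_transGen {P : V → Prop} {v w : V} (h : TransGen (Linked b P) v w) :
    ∃ es, IsPath b v w es ∧ ∀ e ∈ es, ∀ x ∈ b e, P x := by
  induction h using TransGen.head_induction_on with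
  | single h =>
    obtain ⟨e, hv, hw, hP⟩ := h
    exact ⟨[e], .singleton hv hw, by simpa using hP⟩
  | head h _ ih =>
    obtain ⟨e, hv, hu, hP⟩ := h
    obtain ⟨es, hes, hesP⟩ := ih
    exact ⟨e :: es, hes.cons hv hu, List.forall_mem_cons.2 ⟨hP, hesP⟩⟩

theorem exists_isPath_iff_transGen {P : V → Prop} {v w : V} :
    (∃ es, IsPath b v w es ∧ ∀ e ∈ es, ∀ x ∈ b e, P x) ↔ TransGen (Linked b P) v w :=
  ⟨fun ⟨_, hes, hP⟩ => hes.transGen hP, exists_isPath_of_transGen⟩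

def FreeOrOn (segOf : V → Option ℕ) (i : ℕ) (u : V) : Prop :=
  ∀ j, segOf u = some j → j = i

theorem freeOrOn_of_eq_some {segOf : V → Option ℕ} {i : ℕ} {u : V} (h : segOf u = some i) :
    FreeOrOn segOf i u :=
  fun _ hj => Option.some.inj (hj.symm.trans h)

theorem homotopyCond_iff {segOf : V → Option ℕ} :
    HomotopyCond segOf b ↔ ∀ v w, v ≠ w → ∀ i, segOf v = some i → segOf w = some i →
      ¬ TransGen (Linked b (FreeOrOn segOf i)) v w := by
  simp only [HomotopyCond, ← exists_isPath_iff_transGen, FreeOrOn]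
  push Not
  rfl

end Diagram

section Merge

variable {V : Type} [DecidableEq V]

def merge (vv ww : V) (u : V) : V := if u = ww then vv else u

variable {vv ww : V}

theorem merge_of_ne {u : V} (h : u ≠ ww) : merge vv ww u = u := if_neg h

theorem merge_ne (hvw : vv ≠ ww) (u : V) : merge vv ww u ≠ ww := by
  unfold merge; split_ifs with h <;> assumption

theorem merge_eq_self_of_ne {u : V} (h : merge vv ww u ≠ vv) : merge vv ww u = u :=
  merge_of_ne fun hu => h (if_pos hu)

theorem merge_eq_merge_iff {x y : V} :
    merge vv ww x = merge vv ww y ↔ x = y ∨ s(x, y) = s(vv, ww) := by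
  unfold merge
  by_cases hx : x = ww <;> by_cases hy : y = ww <;> simp [hx, hy]; grind

theorem eq_of_merge_eq_merge (hvw : vv ≠ ww) {x y : V} (h : merge vv ww x = merge vv ww y)
    (hx : merge vv ww x ≠ vv) : x = y := by
  refine (merge_eq_merge_iff.1 h).resolve_right fun hxy => hx ?_
  rcases Sym2.mem_iff.1 (hxy ▸ Sym2.mem_mk_left x y) with rfl | rfl
  · exact merge_of_ne hvw
  · exact if_pos rfl

theorem eq_mk_of_isDiag_map_merge {z : Sym2 V} (hz : ¬ z.IsDiag)
    (h : (z.map (merge vv ww)).IsDiag) : z = s(vv, ww) := by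
  induction z using Sym2.ind with
  | _ x y =>
  rw [Sym2.map_mk, Sym2.mk_isDiag_iff, merge_eq_merge_iff] at h
  exact h.resolve_left (mt Sym2.mk_isDiag_iff.2 hz)

end Merge

section Contraction

variable {V E E' : Type} [DecidableEq V] {b : E → Sym2 V} {ι : E' → E} {segOf : V → Option ℕ}
  {vv ww : V}

theorem freeOrOn_of_merge (hseg : segOf ww = none ∨ segOf ww = segOf vv) {i : ℕ} {x : V}
    (h : FreeOrOn segOf i (merge vv ww x)) : FreeOrOn segOf i x := by
  by_cases hx : x = ww
  · rw [hx, merge, if_pos rfl] at h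
    rw [hx]
    intro j hj
    rcases hseg with hseg | hseg
    · simp [hseg] at hj
    · exact h j (hseg ▸ hj)
  · rwa [merge_of_ne hx] at h

theorem Linked.exists_lift_merge (hseg : segOf ww = none ∨ segOf ww = segOf vv) {i : ℕ}
    {u u' : V} (h : Linked (fun e' => (b (ι e')).map (merge vv ww)) (FreeOrOn segOf i) u u') :
    ∃ x y, merge vv ww x = u ∧ merge vv ww y = u' ∧ Linked b (FreeOrOn segOf i) x y :=
  Linked.exists_lift (fun _ => freeOrOn_of_merge hseg) h

theorem homotopyCond_contract_edge {e₀ : E} (hb₀ : b e₀ = s(vv, ww))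
    (hfree : segOf ww = none) (hpath : HomotopyCond segOf b) :
    HomotopyCond segOf (fun e' => (b (ι e')).map (merge vv ww)) := by
  rw [homotopyCond_iff] at hpath ⊢
  intro v w hne i hv hw hchain
  have hv' : merge vv ww v = v := merge_of_ne (by rintro rfl; simp [hfree] at hv)
  have hw' : merge vv ww w = w := merge_of_ne (by rintro rfl; simp [hfree] at hw)
  by_cases hvv : FreeOrOn segOf i vv
  · have hP₀ : ∀ z ∈ b e₀, FreeOrOn segOf i z := by
      rw [hb₀]
      intro z hz
      rcases Sym2.mem_iff.1 hz with rfl | rfl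
      · exact hvv
      · simp [FreeOrOn, hfree]
    refine hpath v w hne i hv hw (hchain.lift_of_fibres
      (fun _ _ => Linked.exists_lift_merge (Or.inl hfree)) (fun x y hxy => ?_) v w hv' hw')
    rcases merge_eq_merge_iff.1 hxy with rfl | hxy
    · exact .refl
    · rw [← hb₀] at hxy
      exact .single ⟨e₀, hxy ▸ Sym2.mem_mk_left x y, hxy ▸ Sym2.mem_mk_right x y, hP₀⟩
  · refine hpath v w hne i hv hw (TransGen.mono (fun u u' hu => ?_) _ _ hchain)
    obtain ⟨x, y, rfl, rfl, hxy⟩ := Linked.exists_lift_merge (Or.inl hfree) hu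
    have hx : merge vv ww x ≠ vv := fun h => hvv (h ▸ hu.left)
    have hy : merge vv ww y ≠ vv := fun h => hvv (h ▸ hu.right)
    rwa [merge_eq_self_of_ne hx, merge_eq_self_of_ne hy]

theorem homotopyCond_contract_arc (hvw : vv ≠ ww) {k : ℕ} (hk : segOf vv = some k)
    (hk' : segOf ww = some k) (hpath : HomotopyCond segOf b) :
    HomotopyCond segOf (fun e' => (b (ι e')).map (merge vv ww)) := by
  rw [homotopyCond_iff] at hpath ⊢
  intro v w hne i hv hw hchain
  wlog hvv : v ≠ vv generalizing v w
  · exact this w v hne.symm hw hv (symm hchain) fun hw => hne ((not_not.1 hvv).trans hw.symm)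
  have hvww : v ≠ ww := by
    obtain ⟨_, ⟨e', hve', -⟩, -⟩ := TransGen.head'_iff.1 hchain
    obtain ⟨x, -, rfl⟩ := Sym2.mem_map.1 hve'
    exact merge_ne hvw x
  obtain ⟨y, hy, hvy⟩ := hchain.lift_until vv
    (fun _ _ => Linked.exists_lift_merge (Or.inr (hk'.trans hk.symm)))
    (fun _ _ => eq_of_merge_eq_merge hvw) v (merge_of_ne hvww) hvv
  have hyP : FreeOrOn segOf i y := by
    obtain ⟨_, -, hlast⟩ := TransGen.tail'_iff.1 hvy
    exact hlast.right
  have hy' : y = w ∨ y = vv ∨ y = ww := by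
    unfold merge at hy; split_ifs at hy <;> tauto
  refine hpath v y ?_ i hv ?_ hvy
  · rintro rfl
    rcases hy' with rfl | rfl | rfl <;> contradiction
  · rcases hy' with rfl | rfl | rfl
    · exact hw
    · rwa [← hyP k hk]
    · rwa [← hyP k hk']

end Contraction

theorem contraction_of_homotopyLinkDiagram_general {V E E' : Type} [DecidableEq V]
    (b : E → Sym2 V) (segOf : V → Option ℕ) (vv ww : V) (hvw : vv ≠ ww)
    (ι : E' → E)
    (hnoloop : ∀ e : E, ¬ (b e).IsDiag)
    (hpath : HomotopyCond segOf b)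
    (hcase :
      -- a mixed or free edge `e₀` joining `vv` to the free vertex `ww` is contracted
      (∃ e₀ : E, b e₀ = s(vv, ww) ∧ segOf ww = none ∧ (∀ e' : E', ι e' ≠ e₀) ∧
        ∀ e : E, e ≠ e₀ → ∃ e', ι e' = e) ∨
      -- or an arc between the segment vertices `vv`, `ww` on a common segment is contracted
      (∃ i : ℕ, segOf vv = some i ∧ segOf ww = some i ∧ Function.Surjective ι))
    -- the contraction creates no multiple edge between any pair of vertices
    (hnomult : Function.Injective fun e : E =>
      (b e).map (fun u => if u = ww then vv else u)) :
    (∀ e' : E', ¬ ((b (ι e')).map (fun u => if u = ww then vv else u)).IsDiag) ∧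
      HomotopyCond segOf
        (fun e' : E' => (b (ι e')).map (fun u => if u = ww then vv else u)) := by
  refine ⟨fun e' hdiag => ?_, ?_⟩
  · have hbe : b (ι e') = s(vv, ww) := eq_mk_of_isDiag_map_merge (hnoloop _) hdiag
    rcases hcase with ⟨e₀, hb₀, -, hmiss, -⟩ | ⟨k, hk, hk', -⟩
    · exact hmiss e' (hnomult (by simp only [hbe, hb₀]))
    · -- the arc would be a path between two vertices of one segment
      exact homotopyCond_iff.1 hpath vv ww hvw k hk hk'
        (.single (.of_eq_mk hbe (freeOrOn_of_eq_some hk) (freeOrOn_of_eq_some hk')))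
  · rcases hcase with ⟨e₀, hb₀, hfree, -, -⟩ | ⟨k, hk, hk', -⟩
    · exact homotopyCond_contract_edge hb₀ hfree hpath
    · exact homotopyCond_contract_arc hvw hk hk' hpath

/-- Contracting a mixed edge, a free edge, or an arc of a homotopy link diagram,
provided no multiple edge is created, again yields a homotopy link diagram: the
contraction has no loops and satisfies the homotopy path condition.  The vertex `ww`
is identified with the vertex `vv`; `ι : E' → E` is the inclusion of the edges of
the contracted diagram (omitting the contracted edge `e₀` in the edge case; an arc
is not an edge, so in the arc case `ι` is onto). -/
theorem contraction_of_homotopyLinkDiagram {V E E' : Type} [DecidableEq V]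
    (b : E → Sym2 V) (segOf : V → Option ℕ) (vv ww : V) (hvw : vv ≠ ww)
    (ι : E' → E) (hι : Function.Injective ι)
    (hnoloop : ∀ e : E, ¬ (b e).IsDiag)
    (hpath : HomotopyCond segOf b)
    (hcase :
      -- a mixed or free edge `e₀` joining `vv` to the free vertex `ww` is contracted
      (∃ e₀ : E, b e₀ = s(vv, ww) ∧ segOf ww = none ∧ (∀ e' : E', ι e' ≠ e₀) ∧
        ∀ e : E, e ≠ e₀ → ∃ e', ι e' = e) ∨
      -- or an arc between the segment vertices `vv`, `ww` on a common segment is contracted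
      (∃ i : ℕ, segOf vv = some i ∧ segOf ww = some i ∧ Function.Surjective ι))
    -- the contraction creates no multiple edge between any pair of vertices
    (hnomult : Function.Injective fun e : E =>
      (b e).map (fun u => if u = ww then vv else u)) :
    (∀ e' : E', ¬ ((b (ι e')).map (fun u => if u = ww then vv else u)).IsDiag) ∧
      HomotopyCond segOf
        (fun e' : E' => (b (ι e')).map (fun u => if u = ww then vv else u)) :=
  contraction_of_homotopyLinkDiagram_general b segOf vv ww hvw ι hnoloop hpath hcase hnomult
end

section
/- If Γ is a homotopy link diagram, then each graft of Γ has at most one segment vertex on each segment. -/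
/-- Vertices of the hybrid `Γ̃`: free vertices of `Γ`, together with one copy
`(e, v)` of each segment vertex `v` for each incident edge `e`. -/
def HybridVert (V E : Type) : Type := V ⊕ (E × V)

/-- Incidence in the hybrid. -/
def hIncid {V E : Type} (b : E → Sym2 V) (segOf : V → Option ℕ) (e : E) :
    HybridVert V E → Prop
  | Sum.inl u => u ∈ b e ∧ segOf u = none
  | Sum.inr p => p.1 = e ∧ p.2 ∈ b e ∧ segOf p.2 ≠ none

/-- Adjacency in the hybrid: lying on a common edge. -/
def hAdj {V E : Type} (b : E → Sym2 V) (segOf : V → Option ℕ)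
    (x y : HybridVert V E) : Prop :=
  ∃ e : E, hIncid b segOf e x ∧ hIncid b segOf e y

section Aux

variable {V E : Type} (b : E → Sym2 V) (segOf : V → Option ℕ) (i : ℕ) (u' : V)

/-- A "good" path: a path to `u'` all of whose edges only touch free vertices or
segment vertices on segment `i`. -/
def GoodPath (v : V) (es : List E) : Prop :=
  IsPath b v u' es ∧ ∀ f ∈ es, ∀ z ∈ b f, ∀ j : ℕ, segOf z = some j → j = i

lemma goodPath_singleton (g : E) (v : V) (hv : v ∈ b g) (hu : u' ∈ b g)
    (hgood : ∀ z ∈ b g, ∀ j : ℕ, segOf z = some j → j = i) :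
    GoodPath b segOf i u' v [g] := by
  refine ⟨⟨⟨g, rfl, hv⟩, ⟨g, rfl, hu⟩, List.isChain_singleton g⟩, ?_⟩
  intro f hf
  simp only [List.mem_singleton] at hf
  subst hf
  exact hgood

lemma goodPath_cons (g : E) (v w : V) (hv : v ∈ b g) (hw : w ∈ b g)
    (hgood : ∀ z ∈ b g, ∀ j : ℕ, segOf z = some j → j = i)
    (es : List E) (h : GoodPath b segOf i u' w es) :
    GoodPath b segOf i u' v (g :: es) := by
  obtain ⟨⟨⟨e₀, hhead, hw0⟩, ⟨eL, hlast, huL⟩, hchain⟩, hG⟩ := h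
  match es, hhead with
  | a :: l, hhead =>
    simp only [List.head?_cons, Option.some.injEq] at hhead
    subst hhead
    refine ⟨⟨⟨g, rfl, hv⟩, ⟨eL, ?_, huL⟩, ?_⟩, ?_⟩
    · rwa [List.getLast?_cons_cons]
    · exact List.isChain_cons_cons.mpr ⟨⟨w, hw, hw0⟩, hchain⟩
    · intro f hf
      rcases List.mem_cons.mp hf with h | h
      · subst h; exact hgood
      · exact hG f h

/-- Main induction: from any hybrid vertex reaching `(e', u')`, one can extract
either the edge-pinning `= e'`, or a free vertex on the incident edge with a good
path to `u'`. -/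
def HybMotive (e' : E) : HybridVert V E → Prop
  | Sum.inl w => ∃ es, GoodPath b segOf i u' w es
  | Sum.inr p => p.1 = e' ∨
      ∃ w, w ∈ b p.1 ∧ segOf w = none ∧ ∃ es, GoodPath b segOf i u' w es

lemma hybMotive_of_reach (e' : E) (hm' : u' ∈ b e') (hu'seg : segOf u' = some i)
    (x : HybridVert V E)
    (h : Relation.ReflTransGen (hAdj b segOf) x (Sum.inr (e', u'))) :
    HybMotive b segOf i u' e' x := by
  induction h using Relation.ReflTransGen.head_induction_on with
  | refl => exact Or.inl rfl
  | head h' hrest ih =>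
    obtain ⟨g, hx, hy⟩ := h'
    rename_i a c
    match a, c with
    | Sum.inl w, Sum.inl w' =>
      obtain ⟨hwmem, hwfree⟩ := hx
      obtain ⟨hw'mem, hw'free⟩ := hy
      obtain ⟨es, hes⟩ := ih
      by_cases hww : w = w'
      · subst hww; exact ⟨es, hes⟩
      · refine ⟨g :: es, goodPath_cons b segOf i u' g w w' hwmem hw'mem ?_ es hes⟩
        intro z hz j hj
        have : b g = s(w, w') := (Sym2.mem_and_mem_iff hww).mp ⟨hwmem, hw'mem⟩
        rw [this, Sym2.mem_iff] at hz
        rcases hz with rfl | rfl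
        · rw [hwfree] at hj; cases hj
        · rw [hw'free] at hj; cases hj
    | Sum.inl w, Sum.inr p =>
      obtain ⟨f, z⟩ := p
      obtain ⟨hwmem, hwfree⟩ := hx
      obtain ⟨hfg, hzmem, hzseg⟩ := hy
      simp only at hfg hzmem hzseg
      subst hfg
      have hwz : w ≠ z := fun h => hzseg (h ▸ hwfree)
      have hbg : b f = s(w, z) := (Sym2.mem_and_mem_iff hwz).mp ⟨hwmem, hzmem⟩
      rcases ih with hge' | ⟨w'', hw''mem, hw''free, es, hes⟩
      · -- f = e'
        have hm'' : u' ∈ b f := by rw [show f = e' from hge']; exact hm'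
        have hu'wz : u' = w ∨ u' = z := by
          have := hm''; rw [hbg, Sym2.mem_iff] at this; exact this
        have hu'z : u' = z := by
          rcases hu'wz with h | h
          · exfalso; rw [h, hwfree] at hu'seg; cases hu'seg
          · exact h
        refine ⟨[f], goodPath_singleton b segOf i u' f w hwmem hm'' ?_⟩
        intro zz hzz j hj
        rw [hbg, Sym2.mem_iff] at hzz
        rcases hzz with rfl | rfl
        · rw [hwfree] at hj; cases hj
        · rw [← hu'z, hu'seg] at hj
          exact (Option.some_injective _ hj).symm
      · -- free vertex w'' on g with good path
        have : w'' = w := by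
          rw [hbg, Sym2.mem_iff] at hw''mem
          rcases hw''mem with h | h
          · exact h
          · exfalso; rw [h] at hw''free; exact hzseg hw''free
        subst this
        exact ⟨es, hes⟩
    | Sum.inr p, Sum.inl w =>
      obtain ⟨f, z⟩ := p
      obtain ⟨hfg, hzmem, hzseg⟩ := hx
      simp only at hfg hzmem hzseg
      subst hfg
      obtain ⟨hwmem, hwfree⟩ := hy
      obtain ⟨es, hes⟩ := ih
      exact Or.inr ⟨w, hwmem, hwfree, es, hes⟩
    | Sum.inr p, Sum.inr q =>
      obtain ⟨f, z⟩ := p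
      obtain ⟨f', z'⟩ := q
      obtain ⟨hfg, hzmem, hzseg⟩ := hx
      obtain ⟨hf'g, hz'mem, hz'seg⟩ := hy
      simp only at hfg hzmem hzseg hf'g hz'mem hz'seg
      subst hfg; subst hf'g
      exact ih

end Aux

/-- For a homotopy link diagram (no loops; homotopy path condition), each graft has
at most one segment vertex on each segment: if two segment vertices on the same
segment give rise to hybrid vertices in the same graft component, then they are the
same vertex of `Γ`. -/
theorem graft_at_most_one_segment_vertex_per_segment {V E : Type}
    (b : E → Sym2 V) (segOf : V → Option ℕ)
    (hnoloop : ∀ e : E, ¬ (b e).IsDiag)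
    (hpath : HomotopyCond segOf b)
    (e e' : E) (u u' : V) (hmem : u ∈ b e) (hmem' : u' ∈ b e')
    (i : ℕ) (hu : segOf u = some i) (hu' : segOf u' = some i)
    (hconn : Relation.ReflTransGen (hAdj b segOf)
      (Sum.inr (e, u) : HybridVert V E) (Sum.inr (e', u'))) :
    u = u' := by
  by_cases hne : u = u'
  · exact hne
  exfalso
  have hM := hybMotive_of_reach b segOf i u' e' hmem' hu' _ hconn
  have contra : ∀ es : List E, GoodPath b segOf i u' u es → False := by
    intro es ⟨hP, hG⟩
    obtain ⟨f, hf, z, hz, j, hj, hji⟩ := hpath u u' hne i hu hu' es hP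
    exact hji (hG f hf z hz j hj)
  rcases hM with hee' | ⟨w, hwmem, hwfree, es, hes⟩
  · -- e = e': the single edge e' joins u and u'
    simp only at hee'
    subst hee'
    have hbe : b e = s(u, u') := (Sym2.mem_and_mem_iff hne).mp ⟨hmem, hmem'⟩
    refine contra [e] (goodPath_singleton b segOf i u' e u hmem hmem' ?_)
    intro z hz j hj
    rw [hbe, Sym2.mem_iff] at hz
    rcases hz with rfl | rfl
    · rw [hu] at hj; exact Option.some_injective _ hj.symm
    · rw [hu'] at hj; exact Option.some_injective _ hj.symm
  · -- free vertex w on e with a good path to u'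
    simp only at hwmem
    have huw : u ≠ w := fun h => by rw [← h, hu] at hwfree; cases hwfree
    have hbe : b e = s(u, w) := (Sym2.mem_and_mem_iff huw).mp ⟨hmem, hwmem⟩
    refine contra (e :: es) (goodPath_cons b segOf i u' e u w hmem hwmem ?_ es hes)
    intro z hz j hj
    rw [hbe, Sym2.mem_iff] at hz
    rcases hz with rfl | rfl
    · rw [hu] at hj; exact Option.some_injective _ hj.symm
    · rw [hwfree] at hj; cases hj
end
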